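/- arXiv:2301.10911 — 2 statements merged into one kernel-verified Lean document; each statement's English description precedes it below -/
import Mathlib

section
/- Let ξ be a random vector in ℝ^m distributed according to the multivariate Gaussian distribution with mean 0 and symmetric positive definite covariance matrix V, let Ψ be an m×m real matrix, let h ∈ ℝ^m, and let φ : ℝ^m → ℝ^m be continuously differentiable with Jacobian Dφ(x) (the matrix with (i,j) entry ∂φ_i/∂x_j). Assume that E[‖φ(ξ+h)‖·‖ξ‖] < ∞ and E[‖Dφ(ξ+h)‖] < ∞. Then E[φ(ξ+h)ᵀ · Ψ · ξ] = E[tr(Dφ(ξ+h)ᵀ · Ψ · V)]. -/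
/-
Factor `V = A Aᵀ` and write `ξ = A ζ` with `ζ` standard Gaussian. In one dimension,
`E[g(Z) Z] = E[g'(Z)]` is integration by parts against the density `ρ`, since `ρ'(x) = -x ρ(x)`;
by Fubini it holds coordinatewise for `ζ`, and summing over coordinates gives
`E[F(ζ) ⬝ ζ] = E[tr DF(ζ)]`. Apply this to `F(ζ) = (Ψ A)ᵀ φ(A ζ + h)`: then
`F(ζ) ⬝ ζ = φ(ξ + h) ⬝ Ψ ξ` and, by the chain rule, `tr DF(ζ) = tr((Ψ A)ᵀ Dφ(ξ + h) A)
= tr(Dφ(ξ + h)ᵀ Ψ V)`. Since `V` is positive definite, `A` is invertible and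
`|ζₖ| ≤ ‖A⁻¹‖ ‖ξ‖`, which turns the assumed integrability into that of every coordinate term.
-/

open Matrix MeasureTheory ProbabilityTheory

/-- The standard Gaussian measure on `ℝ^m` (iid standard normal coordinates). -/
noncomputable def stdGaussian (m : ℕ) : Measure (Fin m → ℝ) :=
  Measure.pi fun _ => gaussianReal 0 1

/-- `μ` is the multivariate Gaussian law on `ℝ^m` with mean `mean` and covariance
matrix `V`, i.e. the law of `mean + A ζ` for a standard Gaussian `ζ` and any matrix
`A` with `A Aᵀ = V`. -/
def IsGaussianLaw {m : ℕ} (μ : Measure (Fin m → ℝ)) (mean : Fin m → ℝ)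
    (V : Matrix (Fin m) (Fin m) ℝ) : Prop :=
  ∃ A : Matrix (Fin m) (Fin m) ℝ, A * Aᵀ = V ∧
    μ = Measure.map (fun x => mean + A.mulVec x) (stdGaussian m)

/-- The Jacobian matrix of a map `φ : ℝ^m → ℝ^m`: entry `(i, j)` is `∂φᵢ/∂xⱼ`. -/
noncomputable def jacobian {m : ℕ} (φ : (Fin m → ℝ) → (Fin m → ℝ))
    (x : Fin m → ℝ) : Matrix (Fin m) (Fin m) ℝ :=
  Matrix.of fun i j => fderiv ℝ (fun y => φ y i) x (Pi.single j 1)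

/-- The operator (spectral) norm of a real square matrix. -/
noncomputable def matOpNorm {n : ℕ} (A : Matrix (Fin n) (Fin n) ℝ) : ℝ :=
  ‖Matrix.toEuclideanCLM (𝕜 := ℝ) A‖

open scoped NNReal

lemma hasDerivAt_gaussianPDFReal_zero_one (x : ℝ) :
    HasDerivAt (gaussianPDFReal 0 1) (-x * gaussianPDFReal 0 1 x) x := by
  have hρ : gaussianPDFReal 0 1 = fun y => (√(2 * Real.pi))⁻¹ * Real.exp (-y ^ 2 / 2) := by
    ext y; simp [gaussianPDFReal]
  have hexp : HasDerivAt (fun y : ℝ => -y ^ 2 / 2) (-x) x :=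
    ((hasDerivAt_pow 2 x).neg.div_const 2).congr_deriv (by ring)
  rw [hρ]
  exact (hexp.exp.const_mul _).congr_deriv (by ring)

lemma integrable_gaussianReal_iff {μ : ℝ} {v : ℝ≥0} (hv : v ≠ 0) {f : ℝ → ℝ} :
    Integrable f (gaussianReal μ v) ↔ Integrable (fun x => gaussianPDFReal μ v x * f x) := by
  rw [gaussianReal_of_var_ne_zero μ hv, integrable_withDensity_iff_integrable_smul'
    (measurable_gaussianPDF μ v) (.of_forall fun _ => gaussianPDF_lt_top)]
  simp [gaussianPDF, ENNReal.toReal_ofReal (gaussianPDFReal_nonneg μ v _)]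

lemma MeasureTheory.Integrable.of_mul_id {ν : Measure ℝ} [IsFiniteMeasure ν] {g : ℝ → ℝ}
    (hg : Continuous g) (hgx : Integrable (fun x => g x * x) ν) : Integrable g ν := by
  obtain ⟨M, hM⟩ := (isCompact_Icc (a := -1) (b := 1)).exists_bound_of_continuousOn hg.continuousOn
  refine (hgx.norm.add (integrable_const M)).mono' hg.aestronglyMeasurable (.of_forall fun x => ?_)
  rcases le_or_gt |x| 1 with hx | hx
  · exact (hM x (abs_le.1 hx)).trans (le_add_of_nonneg_left (norm_nonneg _))
  · refine le_add_of_le_of_nonneg ?_ ((norm_nonneg _).trans (hM 0 (by simp)))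
    show ‖g x‖ ≤ ‖g x * x‖
    rw [norm_mul]
    exact le_mul_of_one_le_right (norm_nonneg _) hx.le

theorem integral_mul_id_gaussianReal {g g' : ℝ → ℝ} (hg : ∀ x, HasDerivAt g (g' x) x)
    (hgx : Integrable (fun x => g x * x) (gaussianReal 0 1))
    (hg' : Integrable g' (gaussianReal 0 1)) :
    ∫ x, g x * x ∂gaussianReal 0 1 = ∫ x, g' x ∂gaussianReal 0 1 := by
  have hg_int : Integrable g (gaussianReal 0 1) :=
    .of_mul_id (continuous_iff_continuousAt.2 fun x => (hg x).continuousAt) hgx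
  rw [integrable_gaussianReal_iff one_ne_zero] at hgx hg' hg_int
  have hparts := integral_mul_deriv_eq_deriv_mul_of_integrable (u := g)
    (fun x _ => hg x) (fun x _ => hasDerivAt_gaussianPDFReal_zero_one x)
    (by simpa [Pi.mul_def, mul_comm, mul_left_comm, mul_assoc] using hgx.neg)
    (by simpa [Pi.mul_def, mul_comm] using hg')
    (by simpa [Pi.mul_def, mul_comm] using hg_int)
  simp only [integral_gaussianReal_eq_integral_smul one_ne_zero, smul_eq_mul]
  calc ∫ x, gaussianPDFReal 0 1 x * (g x * x)
      = -∫ x, g x * (-x * gaussianPDFReal 0 1 x) := by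
        rw [← integral_neg]; congr 1; ext x; ring
    _ = ∫ x, gaussianPDFReal 0 1 x * g' x := by
        rw [hparts, neg_neg]; congr 1; ext x; ring

-- `ProbabilityTheory.stdGaussian` is also in scope, hence the occasional `_root_`.
instance (m : ℕ) : IsProbabilityMeasure (stdGaussian m) := by
  unfold _root_.stdGaussian; infer_instance

section StdGaussian

variable {n : ℕ}

lemma measurePreserving_insertNth_stdGaussian (k : Fin (n + 1)) :
    MeasurePreserving (fun p : ℝ × (Fin n → ℝ) => k.insertNth (α := fun _ => ℝ) p.1 p.2)
      ((gaussianReal 0 1).prod (stdGaussian n)) (stdGaussian (n + 1)) :=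
  (measurePreserving_piFinSuccAbove (fun _ => gaussianReal 0 1) k).symm

lemma measurableEmbedding_insertNth (k : Fin (n + 1)) :
    MeasurableEmbedding (fun p : ℝ × (Fin n → ℝ) => k.insertNth (α := fun _ => ℝ) p.1 p.2) :=
  (MeasurableEquiv.piFinSuccAbove (fun _ => ℝ) k).symm.measurableEmbedding

lemma integrable_insertNth_stdGaussian {E : Type*} [NormedAddCommGroup E] (k : Fin (n + 1))
    {f : (Fin (n + 1) → ℝ) → E} (hf : Integrable f (stdGaussian (n + 1))) :
    Integrable (fun p : ℝ × (Fin n → ℝ) => f (k.insertNth (α := fun _ => ℝ) p.1 p.2))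
      ((gaussianReal 0 1).prod (stdGaussian n)) :=
  ((measurePreserving_insertNth_stdGaussian k).integrable_comp_emb
    (measurableEmbedding_insertNth k)).2 hf

lemma integral_stdGaussian_succ {E : Type*} [NormedAddCommGroup E] [NormedSpace ℝ E]
    (k : Fin (n + 1)) {f : (Fin (n + 1) → ℝ) → E} (hf : Integrable f (stdGaussian (n + 1))) :
    ∫ x, f x ∂_root_.stdGaussian (n + 1)
      = ∫ y, ∫ t, f (k.insertNth (α := fun _ => ℝ) t y) ∂gaussianReal 0 1 ∂stdGaussian n := by
  rw [← (measurePreserving_insertNth_stdGaussian k).integral_comp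
    (measurableEmbedding_insertNth k)]
  exact integral_prod_symm _ (integrable_insertNth_stdGaussian k hf)

lemma hasDerivAt_insertNth (k : Fin (n + 1)) (y : Fin n → ℝ) (t : ℝ) :
    HasDerivAt (fun t : ℝ => k.insertNth (α := fun _ => ℝ) t y) (Pi.single k 1) t := by
  convert hasDerivAt_update (Fin.insertNth (α := fun _ => ℝ) k 0 y) k t using 1
  ext s : 1
  exact (Fin.update_insertNth (α := fun _ => ℝ) k 0 s y).symm

end StdGaussian

theorem integral_mul_apply_stdGaussian {m : ℕ} (k : Fin m) {G : (Fin m → ℝ) → ℝ}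
    (hG : Differentiable ℝ G) (hGx : Integrable (fun x => G x * x k) (stdGaussian m))
    (hG' : Integrable (fun x => fderiv ℝ G x (Pi.single k 1)) (stdGaussian m)) :
    ∫ x, G x * x k ∂stdGaussian m = ∫ x, fderiv ℝ G x (Pi.single k 1) ∂stdGaussian m := by
  obtain ⟨n, rfl⟩ : ∃ n, m = n + 1 := Nat.exists_eq_succ_of_ne_zero k.pos.ne'
  rw [integral_stdGaussian_succ k hGx, integral_stdGaussian_succ k hG']
  refine integral_congr_ae ?_
  filter_upwards [(integrable_insertNth_stdGaussian k hGx).prod_left_ae,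
    (integrable_insertNth_stdGaussian k hG').prod_left_ae] with y hy hy'
  simp only [Fin.insertNth_apply_same] at hy ⊢
  refine integral_mul_id_gaussianReal (fun t => ?_) hy hy'
  exact (hG _).hasFDerivAt.comp_hasDerivAt t (hasDerivAt_insertNth k y t)

theorem integral_dotProduct_stdGaussian {m : ℕ} {F : (Fin m → ℝ) → (Fin m → ℝ)}
    (hF : Differentiable ℝ F) (hFx : ∀ k, Integrable (fun x => F x k * x k) (stdGaussian m))
    (hDF : ∀ k, Integrable (fun x => jacobian F x k k) (stdGaussian m)) :
    ∫ x, F x ⬝ᵥ x ∂stdGaussian m = ∫ x, (jacobian F x).trace ∂stdGaussian m := by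
  simp only [dotProduct, Matrix.trace, Matrix.diag]
  rw [integral_finsetSum _ fun k _ => hFx k, integral_finsetSum _ fun k _ => hDF k]
  exact Finset.sum_congr rfl fun k _ =>
    integral_mul_apply_stdGaussian k (differentiable_pi.1 hF k) (hFx k) (hDF k)

section MulVec

variable {ι κ : Type*} [Fintype κ] [DecidableEq κ]

lemma hasFDerivAt_mulVec (A : Matrix ι κ ℝ) (x : κ → ℝ) :
    HasFDerivAt (A *ᵥ ·) (Matrix.toLin' A).toContinuousLinearMap x :=
  (Matrix.toLin' A).toContinuousLinearMap.hasFDerivAt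

lemma differentiable_mulVec [Fintype ι] (A : Matrix ι κ ℝ) : Differentiable ℝ (A *ᵥ ·) :=
  fun x => (hasFDerivAt_mulVec A x).differentiableAt

end MulVec

section Jacobian

variable {m : ℕ}

lemma jacobian_eq_toMatrix' {φ : (Fin m → ℝ) → (Fin m → ℝ)} {x : Fin m → ℝ}
    (hφ : DifferentiableAt ℝ φ x) :
    jacobian φ x = LinearMap.toMatrix' (fderiv ℝ φ x : (Fin m → ℝ) →ₗ[ℝ] Fin m → ℝ) := by
  ext i j
  simp [jacobian, LinearMap.toMatrix'_apply, fderiv_apply hφ i]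

lemma jacobian_mulVec_comp_affine (B A : Matrix (Fin m) (Fin m) ℝ) (h : Fin m → ℝ)
    {φ : (Fin m → ℝ) → (Fin m → ℝ)} {x : Fin m → ℝ} (hφ : DifferentiableAt ℝ φ (A *ᵥ x + h)) :
    jacobian (fun y => B *ᵥ φ (A *ᵥ y + h)) x = B * jacobian φ (A *ᵥ x + h) * A := by
  have hcomp : HasFDerivAt (fun y => B *ᵥ φ (A *ᵥ y + h)) _ x := (hasFDerivAt_mulVec B _).comp x
    (hφ.hasFDerivAt.comp x ((hasFDerivAt_mulVec A x).add_const h))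
  rw [jacobian_eq_toMatrix' hcomp.differentiableAt, hcomp.fderiv, jacobian_eq_toMatrix' hφ]
  simp only [ContinuousLinearMap.toLinearMap_comp, LinearMap.toMatrix'_comp,
    LinearMap.coe_toContinuousLinearMap, LinearMap.toMatrix'_toLin', Matrix.mul_assoc]

lemma measurable_jacobian_apply (φ : (Fin m → ℝ) → (Fin m → ℝ)) (i j : Fin m) :
    Measurable fun x => jacobian φ x i j :=
  measurable_fderiv_apply_const ℝ _ _

end Jacobian

section L2OpNorm

open scoped Matrix.Norms.L2Operator

variable {ι : Type*} [Fintype ι]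

lemma matOpNorm_eq_norm {n : ℕ} (A : Matrix (Fin n) (Fin n) ℝ) : matOpNorm A = ‖A‖ := rfl

lemma sqrt_dotProduct_self (x : ι → ℝ) : √(x ⬝ᵥ x) = ‖WithLp.toLp 2 x‖ := by
  rw [norm_eq_sqrt_real_inner, EuclideanSpace.inner_toLp_toLp, star_trivial]

lemma abs_apply_le_norm_toLp (x : ι → ℝ) (i : ι) : |x i| ≤ ‖WithLp.toLp 2 x‖ :=
  PiLp.norm_apply_le (WithLp.toLp 2 x) i

lemma norm_toLp_mulVec_le [DecidableEq ι] (A : Matrix ι ι ℝ) (x : ι → ℝ) :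
    ‖WithLp.toLp 2 (A *ᵥ x)‖ ≤ ‖A‖ * ‖WithLp.toLp 2 x‖ :=
  A.l2_opNorm_mulVec (WithLp.toLp 2 x)

lemma abs_apply_le_l2_opNorm [DecidableEq ι] (A : Matrix ι ι ℝ) (i j : ι) : |A i j| ≤ ‖A‖ := by
  calc |A i j| = |(A *ᵥ (Pi.single j 1 : ι → ℝ)) i| := by simp
    _ ≤ ‖A‖ * ‖WithLp.toLp 2 (Pi.single j 1 : ι → ℝ)‖ :=
      (abs_apply_le_norm_toLp _ i).trans (norm_toLp_mulVec_le A _)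
    _ = ‖A‖ := by simp [PiLp.norm_single]

lemma integrable_mulVec_apply_mul_apply [DecidableEq ι] {P : Measure (ι → ℝ)} {A : Matrix ι ι ℝ}
    (hA : IsUnit A) (B : Matrix ι ι ℝ) {u : (ι → ℝ) → (ι → ℝ)} (hu : Continuous u)
    (hint : Integrable (fun ζ => √(u ζ ⬝ᵥ u ζ) * √(A *ᵥ ζ ⬝ᵥ A *ᵥ ζ)) P) (k : ι) :
    Integrable (fun ζ => (B *ᵥ u ζ) k * ζ k) P := by
  refine (hint.const_mul (‖B‖ * ‖A⁻¹‖)).mono' (by fun_prop) (.of_forall fun ζ => ?_)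
  have hζ : ‖WithLp.toLp 2 ζ‖ ≤ ‖A⁻¹‖ * ‖WithLp.toLp 2 (A *ᵥ ζ)‖ := by
    simpa [mulVec_mulVec, nonsing_inv_mul _ ((isUnit_iff_isUnit_det A).1 hA)] using
      norm_toLp_mulVec_le A⁻¹ (A *ᵥ ζ)
  rw [Real.norm_eq_abs, abs_mul, sqrt_dotProduct_self, sqrt_dotProduct_self]
  calc |(B *ᵥ u ζ) k| * |ζ k|
      ≤ (‖B‖ * ‖WithLp.toLp 2 (u ζ)‖) * (‖A⁻¹‖ * ‖WithLp.toLp 2 (A *ᵥ ζ)‖) :=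
        mul_le_mul ((abs_apply_le_norm_toLp _ k).trans (norm_toLp_mulVec_le B _))
          ((abs_apply_le_norm_toLp ζ k).trans hζ) (abs_nonneg _) (by positivity)
    _ = _ := by ring

lemma integrable_jacobian_mulVec_comp_affine {m : ℕ} (B A : Matrix (Fin m) (Fin m) ℝ)
    (h : Fin m → ℝ) {φ : (Fin m → ℝ) → (Fin m → ℝ)} (hφ : Differentiable ℝ φ)
    {P : Measure (Fin m → ℝ)}
    (hint : Integrable (fun ζ => matOpNorm (jacobian φ (A *ᵥ ζ + h))) P) (i j : Fin m) :
    Integrable (fun ζ => jacobian (fun y => B *ᵥ φ (A *ᵥ y + h)) ζ i j) P := by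
  refine (hint.const_mul (‖B‖ * ‖A‖)).mono' (measurable_jacobian_apply _ i j).aestronglyMeasurable
    (.of_forall fun ζ => ?_)
  rw [Real.norm_eq_abs, jacobian_mulVec_comp_affine B A h (hφ _), matOpNorm_eq_norm]
  set J := jacobian φ (A *ᵥ ζ + h)
  calc |(B * J * A) i j| ≤ ‖B * J * A‖ := abs_apply_le_l2_opNorm _ i j
    _ ≤ ‖B‖ * ‖J‖ * ‖A‖ :=
      (norm_mul_le _ _).trans (mul_le_mul_of_nonneg_right (norm_mul_le _ _) (norm_nonneg _))
    _ = ‖B‖ * ‖A‖ * ‖J‖ := by ring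

end L2OpNorm

section LinearAlgebra

variable {ι : Type*} [Fintype ι]

lemma isUnit_of_posDef_mul_transpose [DecidableEq ι] {A : Matrix ι ι ℝ} (hA : (A * Aᵀ).PosDef) :
    IsUnit A := by
  have hdet := (isUnit_iff_isUnit_det _).1 hA.isUnit
  rw [det_mul] at hdet
  exact (isUnit_iff_isUnit_det A).2 (isUnit_of_mul_isUnit_left hdet)

lemma measurableEmbedding_const_add_mulVec [DecidableEq ι] (c : ι → ℝ) {A : Matrix ι ι ℝ}
    (hA : IsUnit A) : MeasurableEmbedding fun x => c + A *ᵥ x :=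
  (Homeomorph.addLeft c).measurableEmbedding.comp
    (LinearMap.isClosedEmbedding_of_injective (f := A.mulVecLin)
      (LinearMap.ker_eq_bot.2 (mulVec_injective_iff_isUnit.2 hA))).measurableEmbedding

lemma trace_transpose_mul_mul_mul (Ψ A J : Matrix ι ι ℝ) :
    ((Ψ * A)ᵀ * J * A).trace = (Jᵀ * Ψ * (A * Aᵀ)).trace := by
  rw [← trace_transpose]
  simp only [transpose_mul, transpose_transpose, Matrix.mul_assoc]
  rw [trace_mul_comm]
  simp only [Matrix.mul_assoc]

end LinearAlgebra

theorem stmt_2_general {m : ℕ} (V : Matrix (Fin m) (Fin m) ℝ) (hV : V.PosDef)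
    (μ : Measure (Fin m → ℝ)) (hμ : IsGaussianLaw μ 0 V)
    (Ψ : Matrix (Fin m) (Fin m) ℝ) (h : Fin m → ℝ)
    (φ : (Fin m → ℝ) → (Fin m → ℝ)) (hφ : ContDiff ℝ 1 φ)
    (hint1 : Integrable
      (fun x => Real.sqrt (φ (x + h) ⬝ᵥ φ (x + h)) * Real.sqrt (x ⬝ᵥ x)) μ)
    (hint2 : Integrable (fun x => matOpNorm (jacobian φ (x + h))) μ) :
    ∫ x, φ (x + h) ⬝ᵥ Ψ.mulVec x ∂μ
      = ∫ x, ((jacobian φ (x + h))ᵀ * Ψ * V).trace ∂μ := by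
  obtain ⟨A, rfl, rfl⟩ := hμ
  have hA := isUnit_of_posDef_mul_transpose hV
  have hT := measurableEmbedding_const_add_mulVec 0 hA
  rw [hT.integral_map, hT.integral_map]
  rw [hT.integrable_map_iff] at hint1 hint2
  simp only [zero_add, Function.comp_def] at hint1 hint2 ⊢
  have hφd := hφ.differentiable one_ne_zero
  set F := fun ζ => (Ψ * A)ᵀ *ᵥ φ (A *ᵥ ζ + h)
  have hF : Differentiable ℝ F :=
    (differentiable_mulVec (Ψ * A)ᵀ).comp (hφd.comp ((differentiable_mulVec A).add_const h))
  calc _ = ∫ ζ, F ζ ⬝ᵥ ζ ∂stdGaussian m := by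
        simp only [F, mulVec_mulVec, dotProduct_mulVec, mulVec_transpose]
    _ = ∫ ζ, (jacobian F ζ).trace ∂stdGaussian m :=
        integral_dotProduct_stdGaussian hF
          (integrable_mulVec_apply_mul_apply hA _ (by fun_prop) hint1)
          (fun k => integrable_jacobian_mulVec_comp_affine _ A h hφd hint2 k k)
    _ = _ := by
        simp only [F, jacobian_mulVec_comp_affine _ A h (hφd _), trace_transpose_mul_mul_mul]

/-- Generalized Stein lemma (Lemma 2 of Hansen 2016, Lemma B.5 of the paper):
for `ξ ~ N(0, V)` with `V` symmetric positive definite, `φ` continuously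
differentiable with suitable integrability,
`E[φ(ξ+h)ᵀ Ψ ξ] = E[tr(Dφ(ξ+h)ᵀ Ψ V)]`. -/
theorem stmt_2 {m : ℕ} (V : Matrix (Fin m) (Fin m) ℝ) (hV : V.PosDef)
    (hVsymm : V.IsSymm) (μ : Measure (Fin m → ℝ)) (hμ : IsGaussianLaw μ 0 V)
    (Ψ : Matrix (Fin m) (Fin m) ℝ) (h : Fin m → ℝ)
    (φ : (Fin m → ℝ) → (Fin m → ℝ)) (hφ : ContDiff ℝ 1 φ)
    (hint1 : Integrable
      (fun x => Real.sqrt (φ (x + h) ⬝ᵥ φ (x + h)) * Real.sqrt (x ⬝ᵥ x)) μ)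
    (hint2 : Integrable (fun x => matOpNorm (jacobian φ (x + h))) μ) :
    ∫ x, φ (x + h) ⬝ᵥ Ψ.mulVec x ∂μ
      = ∫ x, ((jacobian φ (x + h))ᵀ * Ψ * V).trace ∂μ :=
  stmt_2_general V hV μ hμ Ψ h φ hφ hint1 hint2
end

section
/- For every real ω, E[‖Γ₁(ξ+τ) − ω·(Γ₁−Γ)(ξ+τ)‖²_Υ] = tr(Υ·Γ₁·Ω·Γ₁ᵀ) + ω²·(tr(Υ·M) + τᵀ·P·τ) − 2·ω·tr(Υ·M). -/
open Matrix MeasureTheory ProbabilityTheory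

/-!
Write `ξ = A ζ` with `ζ` standard Gaussian and `A Aᵀ = Ω`. The pooled estimate is then affine
in `ζ`: it equals `B A ζ + B τ` with `B = Γ₁ - ω (Γ₁ - Γ)`. Since the coordinates of `ζ` are
centred with `E[ζᵢ ζⱼ] = δᵢⱼ`, the risk of an affine map is `tr (Υ B Ω Bᵀ) + ‖B τ‖²_Υ`.
Expanding in `ω`, both cross terms equal `tr (Υ M)` because `Υ` and `Ω` are symmetric, and
`Γ₁ τ = 0` reduces the bias to `-ω (Γ₁ - Γ) τ`, whose squared norm is `ω² τᵀ P τ`.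
-/

namespace Matrix

lemma dotProduct_mulVec_eq_sum {n R : Type*} [Fintype n] [CommSemiring R]
    (A : Matrix n n R) (v : n → R) : v ⬝ᵥ A *ᵥ v = ∑ i, ∑ j, A i j * (v i * v j) := by
  simp only [dotProduct, mulVec, Finset.mul_sum]
  exact Finset.sum_congr rfl fun i _ => Finset.sum_congr rfl fun j _ => by ring

variable {n k R : Type*} [Fintype n] [Fintype k] [CommRing R] {Υ : Matrix n n R}
  {V : Matrix k k R}

lemma trace_mul_mul_mul_transpose_comm (hΥ : Υ.IsSymm) (hV : V.IsSymm) (X Y : Matrix n k R) :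
    (Υ * (X * V * Yᵀ)).trace = (Υ * (Y * V * Xᵀ)).trace := by
  rw [← trace_transpose, transpose_mul, transpose_mul, transpose_mul, transpose_transpose,
    hΥ.eq, hV.eq, trace_mul_comm, Matrix.mul_assoc Y]

lemma trace_mul_sub_smul_mul_mul_transpose (hΥ : Υ.IsSymm) (hV : V.IsSymm)
    (X D : Matrix n k R) (w : R) :
    (Υ * ((X - w • D) * V * (X - w • D)ᵀ)).trace
      = (Υ * (X * V * Xᵀ)).trace - 2 * w * (Υ * (X * V * Dᵀ)).trace
        + w ^ 2 * (Υ * (D * V * Dᵀ)).trace := by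
  simp only [transpose_sub, transpose_smul, Matrix.sub_mul, Matrix.mul_sub, Matrix.smul_mul,
    Matrix.mul_smul, trace_sub, trace_smul, smul_eq_mul]
  rw [trace_mul_mul_mul_transpose_comm hΥ hV D X]
  ring

lemma dotProduct_transpose_mul_mul_mulVec (D : Matrix n k R) (Υ : Matrix n n R) (v : k → R) :
    v ⬝ᵥ (Dᵀ * Υ * D) *ᵥ v = D *ᵥ v ⬝ᵥ Υ *ᵥ D *ᵥ v := by
  rw [Matrix.mul_assoc, ← mulVec_mulVec, dotProduct_mulVec, vecMul_transpose, mulVec_mulVec]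

end Matrix

namespace stdGaussian

variable {m : ℕ}

instance : IsProbabilityMeasure (stdGaussian m) := by
  unfold _root_.stdGaussian; infer_instance

lemma memLp_two_eval (i : Fin m) : MemLp (fun ζ : Fin m → ℝ => ζ i) 2 (stdGaussian m) :=
  (memLp_id_gaussianReal 2).comp_measurePreserving (measurePreserving_eval _ i)

lemma integrable_eval (i : Fin m) : Integrable (fun ζ : Fin m → ℝ => ζ i) (stdGaussian m) :=
  (memLp_two_eval i).integrable one_le_two

lemma integrable_eval_mul_eval (i j : Fin m) :
    Integrable (fun ζ : Fin m → ℝ => ζ i * ζ j) (stdGaussian m) :=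
  (memLp_two_eval i).integrable_mul (memLp_two_eval j)

lemma integral_eval (i : Fin m) : ∫ ζ, ζ i ∂(stdGaussian m) = 0 := by
  rw [_root_.stdGaussian, MeasureTheory.integral_eval, integral_id_gaussianReal]

lemma integral_eval_mul_eval (i j : Fin m) :
    ∫ ζ, ζ i * ζ j ∂(stdGaussian m) = (1 : Matrix (Fin m) (Fin m) ℝ) i j := by
  obtain rfl | hij := eq_or_ne i j
  · rw [one_apply_eq, _root_.stdGaussian, integral_comp_eval (μ := fun _ => gaussianReal 0 1)
      (f := fun x : ℝ => x * x) (by fun_prop)]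
    have hvar := variance_id_gaussianReal (μ := 0) (v := 1)
    rw [variance_of_integral_eq_zero aemeasurable_id integral_id_gaussianReal] at hvar
    simpa [sq] using hvar
  · have hind : IndepFun (fun ζ : Fin m → ℝ => ζ i) (fun ζ => ζ j) (stdGaussian m) :=
      (iIndepFun_pi (X := fun _ => id) fun _ => aemeasurable_id).indepFun hij
    rw [hind.integral_fun_mul_eq_mul_integral (integrable_eval i).1 (integrable_eval j).1,
      integral_eval, zero_mul, one_apply_ne hij]

lemma integrable_dotProduct (l : Fin m → ℝ) :
    Integrable (fun ζ : Fin m → ℝ => l ⬝ᵥ ζ) (stdGaussian m) :=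
  integrable_finsetSum _ fun i _ => (integrable_eval i).const_mul _

lemma integral_dotProduct (l : Fin m → ℝ) : ∫ ζ, l ⬝ᵥ ζ ∂(stdGaussian m) = 0 := by
  simp only [dotProduct]
  rw [integral_finsetSum _ fun i _ => (integrable_eval i).const_mul _]
  simp [integral_const_mul, integral_eval]

lemma integrable_dotProduct_mulVec (R : Matrix (Fin m) (Fin m) ℝ) :
    Integrable (fun ζ : Fin m → ℝ => ζ ⬝ᵥ R *ᵥ ζ) (stdGaussian m) := by
  simp only [Matrix.dotProduct_mulVec_eq_sum]
  exact integrable_finsetSum _ fun i _ =>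
    integrable_finsetSum _ fun j _ => (integrable_eval_mul_eval i j).const_mul _

lemma integral_dotProduct_mulVec (R : Matrix (Fin m) (Fin m) ℝ) :
    ∫ ζ, ζ ⬝ᵥ R *ᵥ ζ ∂(stdGaussian m) = R.trace := by
  simp only [Matrix.dotProduct_mulVec_eq_sum]
  have hterm (i j : Fin m) := (integrable_eval_mul_eval i j).const_mul (R i j)
  rw [integral_finsetSum _ fun i _ => integrable_finsetSum _ fun j _ => hterm i j, trace]
  refine Finset.sum_congr rfl fun i _ => ?_
  rw [integral_finsetSum _ fun j _ => hterm i j]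
  simp [integral_const_mul, integral_eval_mul_eval, one_apply]

variable {ι : Type*} [Fintype ι]

lemma integral_affine_dotProduct_mulVec (C : Matrix ι (Fin m) ℝ) (c : ι → ℝ)
    (Υ : Matrix ι ι ℝ) :
    ∫ ζ, (C *ᵥ ζ + c) ⬝ᵥ Υ *ᵥ (C *ᵥ ζ + c) ∂(stdGaussian m)
      = (Cᵀ * Υ * C).trace + c ⬝ᵥ Υ *ᵥ c := by
  set l := (Υ *ᵥ c) ᵥ* C + c ᵥ* (Υ * C)
  have hexpand (ζ : Fin m → ℝ) : (C *ᵥ ζ + c) ⬝ᵥ Υ *ᵥ (C *ᵥ ζ + c)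
      = ζ ⬝ᵥ (Cᵀ * Υ * C) *ᵥ ζ + (l ⬝ᵥ ζ + c ⬝ᵥ Υ *ᵥ c) := by
    have hquad : C *ᵥ ζ ⬝ᵥ Υ *ᵥ C *ᵥ ζ = ζ ⬝ᵥ (Cᵀ * Υ * C) *ᵥ ζ := by
      rw [mulVec_mulVec, ← vecMul_transpose, ← dotProduct_mulVec, mulVec_mulVec,
        Matrix.mul_assoc]
    have hcross₁ : C *ᵥ ζ ⬝ᵥ Υ *ᵥ c = (Υ *ᵥ c) ᵥ* C ⬝ᵥ ζ := by
      rw [dotProduct_comm, dotProduct_mulVec]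
    have hcross₂ : c ⬝ᵥ Υ *ᵥ C *ᵥ ζ = c ᵥ* (Υ * C) ⬝ᵥ ζ := by
      rw [mulVec_mulVec, dotProduct_mulVec]
    rw [mulVec_add, add_dotProduct, dotProduct_add, dotProduct_add, hquad, hcross₁, hcross₂,
      add_dotProduct]
    ring
  have hlin : Integrable (fun ζ => l ⬝ᵥ ζ + c ⬝ᵥ Υ *ᵥ c) (stdGaussian m) :=
    (integrable_dotProduct l).add (integrable_const _)
  simp only [hexpand]
  rw [integral_add (integrable_dotProduct_mulVec _) hlin,
    integral_add (integrable_dotProduct l) (integrable_const _),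
    integral_dotProduct_mulVec, integral_dotProduct, integral_const]
  simp

end stdGaussian

namespace IsGaussianLaw

variable {m : ℕ} {μ : Measure (Fin m → ℝ)} {a : Fin m → ℝ} {V : Matrix (Fin m) (Fin m) ℝ}

lemma isSymm (h : IsGaussianLaw μ a V) : V.IsSymm := by
  obtain ⟨A, rfl, -⟩ := h
  exact isSymm_mul_transpose_self A

lemma integral_affine_dotProduct_mulVec {ι : Type*} [Fintype ι] (h : IsGaussianLaw μ a V)
    (B : Matrix ι (Fin m) ℝ) (c : ι → ℝ) (Υ : Matrix ι ι ℝ) :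
    ∫ x, (B *ᵥ x + c) ⬝ᵥ Υ *ᵥ (B *ᵥ x + c) ∂μ
      = (Υ * (B * V * Bᵀ)).trace + (B *ᵥ a + c) ⬝ᵥ Υ *ᵥ (B *ᵥ a + c) := by
  obtain ⟨A, rfl, rfl⟩ := h
  rw [integral_map (by fun_prop) (by fun_prop)]
  have haffine (ζ : Fin m → ℝ) : B *ᵥ (a + A *ᵥ ζ) + c = (B * A) *ᵥ ζ + (B *ᵥ a + c) := by
    rw [mulVec_add, mulVec_mulVec]; abel
  simp only [haffine, stdGaussian.integral_affine_dotProduct_mulVec]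
  rw [trace_mul_comm, ← Matrix.mul_assoc, trace_mul_comm, transpose_mul]
  simp only [Matrix.mul_assoc]

end IsGaussianLaw

theorem stmt_8_general {m d₁ : ℕ}
    (Ω : Matrix (Fin m) (Fin m) ℝ)
    (μ : Measure (Fin m → ℝ)) (hμ : IsGaussianLaw μ 0 Ω)
    (τ : Fin m → ℝ)
    (Γ₁ Γ : Matrix (Fin d₁) (Fin m) ℝ) (hΓ₁τ : Γ₁.mulVec τ = 0)
    (Υ : Matrix (Fin d₁) (Fin d₁) ℝ) (hΥsymm : Υ.IsSymm)
    (M : Matrix (Fin d₁) (Fin d₁) ℝ) (hMdef : M = (Γ₁ - Γ) * Ω * (Γ₁ - Γ)ᵀ)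
    (hMcross : Γ₁ * Ω * (Γ₁ - Γ)ᵀ = M)
    (P : Matrix (Fin m) (Fin m) ℝ) (hPdef : P = (Γ₁ - Γ)ᵀ * Υ * (Γ₁ - Γ))
    :
    ∀ w : ℝ,
      ∫ x, (Γ₁.mulVec (x + τ) - w • (Γ₁ - Γ).mulVec (x + τ))
            ⬝ᵥ Υ.mulVec (Γ₁.mulVec (x + τ) - w • (Γ₁ - Γ).mulVec (x + τ)) ∂μ
        = (Υ * Γ₁ * Ω * Γ₁ᵀ).trace
          + w ^ 2 * ((Υ * M).trace + τ ⬝ᵥ P.mulVec τ)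
          - 2 * w * (Υ * M).trace := by
  intro w
  generalize Γ₁ - Γ = D at hMdef hMcross hPdef ⊢
  have hpool (x : Fin m → ℝ) : Γ₁ *ᵥ (x + τ) - w • D *ᵥ (x + τ)
      = (Γ₁ - w • D) *ᵥ x + (Γ₁ - w • D) *ᵥ τ := by
    rw [← mulVec_add, sub_mulVec, smul_mulVec]
  have hbias : (Γ₁ - w • D) *ᵥ τ = -(w • D *ᵥ τ) := by
    rw [sub_mulVec, hΓ₁τ, smul_mulVec, zero_sub]
  simp only [hpool]
  rw [hμ.integral_affine_dotProduct_mulVec, mulVec_zero, zero_add, hbias,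
    trace_mul_sub_smul_mul_mul_transpose hΥsymm hμ.isSymm, hMcross, ← hMdef, hPdef,
    dotProduct_transpose_mul_mul_mulVec]
  simp only [mulVec_neg, neg_dotProduct, dotProduct_neg, mulVec_smul, smul_dotProduct,
    dotProduct_smul, smul_eq_mul, Matrix.mul_assoc]
  ring

/-- Fixed-weight asymptotic risk expansion of the linear-pool semi-modular posterior
mean (central computation in the proof of Lemma 2 of the paper). -/
theorem stmt_8 {m d₁ : ℕ}
    (Ω : Matrix (Fin m) (Fin m) ℝ) (hΩ : Ω.PosSemidef)
    (μ : Measure (Fin m → ℝ)) (hμ : IsGaussianLaw μ 0 Ω)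
    (τ : Fin m → ℝ)
    (Γ₁ Γ : Matrix (Fin d₁) (Fin m) ℝ) (hΓ₁τ : Γ₁.mulVec τ = 0)
    (Υ : Matrix (Fin d₁) (Fin d₁) ℝ) (hΥ : Υ.PosDef) (hΥsymm : Υ.IsSymm)
    (M : Matrix (Fin d₁) (Fin d₁) ℝ) (hMdef : M = (Γ₁ - Γ) * Ω * (Γ₁ - Γ)ᵀ)
    (hMcross : Γ₁ * Ω * (Γ₁ - Γ)ᵀ = M)
    (P : Matrix (Fin m) (Fin m) ℝ) (hPdef : P = (Γ₁ - Γ)ᵀ * Υ * (Γ₁ - Γ))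
    :
    ∀ w : ℝ,
      ∫ x, (Γ₁.mulVec (x + τ) - w • (Γ₁ - Γ).mulVec (x + τ))
            ⬝ᵥ Υ.mulVec (Γ₁.mulVec (x + τ) - w • (Γ₁ - Γ).mulVec (x + τ)) ∂μ
        = (Υ * Γ₁ * Ω * Γ₁ᵀ).trace
          + w ^ 2 * ((Υ * M).trace + τ ⬝ᵥ P.mulVec τ)
          - 2 * w * (Υ * M).trace :=
  stmt_8_general Ω μ hμ τ Γ₁ Γ hΓ₁τ Υ hΥsymm M hMdef hMcross P hPdef
end
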